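/- arXiv:2505.01018 — 2 statements merged into one kernel-verified Lean document; each statement's English description precedes it below -/
import Mathlib

section
/- Let t ≥ 1 be squarefree with t ≡ 1 (mod 24), k ≥ 2, χ a Dirichlet character. Given a : Z≥1 → C supported on n ≡ 1 (mod 24), define for squarefree t the t-th Shimura coefficients B_t(n) = Σ_{d|n} χ(d)(d/t)(12/(n/d))d^{k−1}a(tn²/d²). Define b_t(m) = a(m/t) (zero unless t | m). Then for all n, Σ_{d|n} χ(d)(d/t)(12/(n/d))d^{k−1}·b_t(n²/d²) equals (12/t)·B_t(n/t) when t | n and 0 otherwise; i.e., S₁(f | V_t) = (12/t)·(S_t(f) | V_t) coefficientwise. -/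
/-- The Kronecker symbol `(12/n)`: `1` if `n ≡ ±1 (mod 12)`, `−1` if `n ≡ ±5 (mod 12)`,
`0` otherwise. -/
def kron12 (n : ℕ) : ℤ :=
  if n % 12 = 1 ∨ n % 12 = 11 then 1 else if n % 12 = 5 ∨ n % 12 = 7 then -1 else 0

lemma kron12_mul_one_mod (t m : ℕ) (ht : t % 12 = 1) : kron12 (t * m) = kron12 m := by
  unfold kron12
  rw [Nat.mul_mod, ht, one_mul, Nat.mod_mod_of_dvd m dvd_rfl]

/-- Commutativity of the Shimura lifts with `V_t`: for squarefree `t ≡ 1 (mod 24)`,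
with `B_t(n) = Σ_{d|n} χ(d)(d/t)(12/(n/d)) d^{k−1} a(t n²/d²)` and `b_t(m) = a(m/t)`
(zero unless `t | m`), one has for all `n ≥ 1`
`Σ_{d|n} χ(d)(d/t)(12/(n/d)) d^{k−1} b_t(n²/d²) = (12/t)·B_t(n/t)` if `t | n`, and `0` otherwise. -/
theorem stmt17 (N k : ℕ) (hk : 2 ≤ k) (χ : DirichletCharacter ℂ N)
    (t : ℕ) (htpos : 1 ≤ t) (hsf : Squarefree t) (ht24 : t % 24 = 1)
    (a : ℕ → ℂ) (hsupp : ∀ n : ℕ, n % 24 ≠ 1 → a n = 0)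
    (bt : ℕ → ℂ) (hbt : ∀ m : ℕ, bt m = if t ∣ m then a (m / t) else 0)
    (B : ℕ → ℂ)
    (hB : ∀ n : ℕ, B n = ∑ d ∈ n.divisors,
      χ (d : ZMod N) * (jacobiSym (d : ℤ) t : ℂ) * (kron12 (n / d) : ℂ) *
        (d : ℂ) ^ (k - 1) * a (t * n ^ 2 / d ^ 2)) :
    ∀ n : ℕ, 1 ≤ n →
      (∑ d ∈ n.divisors,
          χ (d : ZMod N) * (jacobiSym (d : ℤ) t : ℂ) * (kron12 (n / d) : ℂ) *
            (d : ℂ) ^ (k - 1) * bt (n ^ 2 / d ^ 2))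
        = if t ∣ n then (kron12 t : ℂ) * B (n / t) else 0 := by
  intro n hn
  have hn0 : n ≠ 0 := by omega
  have ht12 : t % 12 = 1 := by omega
  have hkt : kron12 t = 1 := by unfold kron12; simp [ht12]
  by_cases htn : t ∣ n
  · simp only [htn, if_true, hkt, Int.cast_one, one_mul, hB]
    set u := n / t with hu
    have hnu : n = t * u := (Nat.mul_div_cancel' htn).symm
    have hu0 : u ≠ 0 := by
      intro h; rw [h, mul_zero] at hnu; exact hn0 hnu
    have hsub : u.divisors ⊆ n.divisors :=
      Nat.divisors_subset_of_dvd hn0 (Nat.div_dvd_of_dvd htn)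
    have hvan : ∀ d ∈ n.divisors, d ∉ u.divisors →
        χ (d : ZMod N) * (jacobiSym (d : ℤ) t : ℂ) * (kron12 (n / d) : ℂ) *
          (d : ℂ) ^ (k - 1) * bt (n ^ 2 / d ^ 2) = 0 := by
      intro d hd hdu
      have hdn : d ∣ n := (Nat.mem_divisors.mp hd).1
      have hndu : ¬ d ∣ u := fun h => hdu (Nat.mem_divisors.mpr ⟨h, hu0⟩)
      have : bt (n ^ 2 / d ^ 2) = 0 := by
        rw [hbt, if_neg]
        intro htd
        rw [(Nat.div_pow hdn).symm] at htd
        have h1 : t ∣ n / d := (hsf.dvd_pow_iff_dvd two_ne_zero).mp htd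
        have h2 : d * t ∣ n := (Nat.dvd_div_iff_mul_dvd hdn).mp h1
        exact hndu ((Nat.dvd_div_iff_mul_dvd htn).mpr (by rwa [mul_comm] at h2))
      rw [this, mul_zero]
    rw [← Finset.sum_subset hsub hvan]
    apply Finset.sum_congr rfl
    intro d hd
    have hdu : d ∣ u := (Nat.mem_divisors.mp hd).1
    have hdn : d ∣ n := hdu.trans (Nat.div_dvd_of_dvd htn)
    have hnd : n / d = t * (u / d) := by
      rw [hnu, Nat.mul_div_assoc t hdu]
    have hsq : n ^ 2 / d ^ 2 = (n / d) ^ 2 := (Nat.div_pow hdn).symm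
    have husq : u ^ 2 / d ^ 2 = (u / d) ^ 2 := (Nat.div_pow hdu).symm
    have htdvd : t ∣ n ^ 2 / d ^ 2 := by
      rw [hsq, hnd]; exact (dvd_mul_right t _).trans (dvd_pow_self _ two_ne_zero)
    rw [hbt, if_pos htdvd]
    have harg : n ^ 2 / d ^ 2 / t = t * u ^ 2 / d ^ 2 := by
      have h2 : d ^ 2 ∣ u ^ 2 := pow_dvd_pow_of_dvd hdu 2
      rw [hsq, hnd, Nat.mul_div_assoc t h2, husq, mul_pow, sq t]
      rw [Nat.mul_assoc, Nat.mul_div_cancel_left _ (by omega : 0 < t)]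
    have hkron : kron12 (n / d) = kron12 (u / d) := by
      rw [hnd, kron12_mul_one_mod _ _ ht12]
    rw [harg, hkron]
  · simp only [htn, if_false]
    apply Finset.sum_eq_zero
    intro d hd
    have hdn : d ∣ n := (Nat.mem_divisors.mp hd).1
    have : bt (n ^ 2 / d ^ 2) = 0 := by
      rw [hbt, if_neg]
      intro htd
      rw [(Nat.div_pow hdn).symm] at htd
      have h1 : t ∣ n / d := (hsf.dvd_pow_iff_dvd two_ne_zero).mp htd
      exact htn (h1.trans (Nat.div_dvd_of_dvd hdn))
    rw [this, mul_zero]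
end

section
/- Let G(z) = g(z)g(6z) − g(2z)g(3z) where g = Σ a(n)q^n is a formal power series satisfying a(2n) = a(2)a(n) − χ(2)·2^{k−1}·a(n/2) for all n (with a(n/2)=0 if 2∤n). Then the power series G = Σ c(n)q^n satisfies G | U_2 = χ(2)·2^{k−1}·G, i.e., c(2n) = χ(2)2^{k−1}c(n) for all n. -/
/-!
Write `V_m` for `g(z) ↦ g(mz)` (`PowerSeries.expand`) and `U_m` for `Σ aₙ qⁿ ↦ Σ a_{mn} qⁿ`
(`PowerSeries.heckeU`).
Then `U_m (f · V_m h) = (U_m f) · h`, and `U_m` commutes with `V_n` for `n` coprime to `m`.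
With `g | U_2 = a(2) g − λ g | V_2`, where `λ = χ(2) 2^{k−1}`, this gives
`U_2 (g · V_2 V_3 g) = a(2) g V_3 g − λ V_2 g V_3 g` and
`U_2 (V_3 g · V_2 g) = a(2) g V_3 g − λ g V_6 g`, whose difference is `λ G`.
-/

/-- The q-expansion of `G(z) = g(z)g(6z) − g(2z)g(3z)` where `g = Σ a(n)qⁿ`. -/
noncomputable def Gser (a : ℕ → ℂ) : PowerSeries ℂ :=
  PowerSeries.mk a * PowerSeries.mk (fun m => if 6 ∣ m then a (m / 6) else 0)
    - PowerSeries.mk (fun m => if 2 ∣ m then a (m / 2) else 0)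
      * PowerSeries.mk (fun m => if 3 ∣ m then a (m / 3) else 0)

namespace PowerSeries

variable {R : Type*} [CommRing R]

noncomputable def heckeU (m : ℕ) : R⟦X⟧ →ₗ[R] R⟦X⟧ where
  toFun f := mk fun n => coeff (m * n) f
  map_add' f g := by ext; simp
  map_smul' c f := by ext; simp

@[simp]
theorem coeff_heckeU (m n : ℕ) (f : R⟦X⟧) : coeff n (heckeU m f) = coeff (m * n) f :=
  coeff_mk n fun n => coeff (m * n) f

theorem heckeU_expand_of_coprime {m n : ℕ} (hmn : m.Coprime n) (hn : n ≠ 0) (f : R⟦X⟧) :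
    heckeU m (expand n hn f) = expand n hn (heckeU m f) := by
  ext j
  simp only [coeff_heckeU, coeff_expand]
  by_cases hj : n ∣ j
  · rw [if_pos (dvd_mul_of_dvd_right hj m), if_pos hj, Nat.mul_div_assoc m hj]
  · rw [if_neg (mt hmn.symm.dvd_of_dvd_mul_left hj), if_neg hj]

theorem heckeU_mul_expand (m : ℕ) (hm : m ≠ 0) (f h : R⟦X⟧) :
    heckeU m (f * expand m hm h) = heckeU m f * h := by
  ext j
  rw [coeff_heckeU, coeff_mul, coeff_mul]
  symm
  refine Finset.sum_of_injOn (fun p => (m * p.1, m * p.2)) ?_ ?_ ?_ ?_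
  · intro p _ q _ hpq
    simp only [Prod.mk.injEq, mul_right_inj' hm] at hpq
    exact Prod.ext hpq.1 hpq.2
  · intro p hp
    rw [Finset.mem_coe, Finset.HasAntidiagonal.mem_antidiagonal] at hp ⊢
    rw [← hp, mul_add]
  · intro q hq hq'
    rw [Finset.HasAntidiagonal.mem_antidiagonal] at hq
    rw [coeff_expand_of_not_dvd, mul_zero]
    rintro ⟨t, ht⟩
    obtain ⟨s, hs⟩ : m ∣ q.1 := (Nat.dvd_add_left ⟨t, ht⟩).mp (hq ▸ dvd_mul_right m j)
    refine hq' ⟨(s, t), ?_, Prod.ext hs.symm ht.symm⟩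
    rw [Finset.mem_coe, Finset.HasAntidiagonal.mem_antidiagonal]
    exact mul_left_cancel₀ hm (by rw [mul_add, ← hs, ← ht, hq])
  · intro p _
    rw [coeff_heckeU, coeff_expand_mul]

noncomputable def expandProdDiff (m n : ℕ) (hm : m ≠ 0) (hn : n ≠ 0) (g : R⟦X⟧) : R⟦X⟧ :=
  g * expand (m * n) (mul_ne_zero hm hn) g - expand m hm g * expand n hn g

theorem expand_comm (m n : ℕ) (hm : m ≠ 0) (hn : n ≠ 0) (f : R⟦X⟧) :
    expand m hm (expand n hn f) = expand n hn (expand m hm f) := by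
  rw [← expand_mul, ← expand_mul]
  congr 2
  exact Nat.mul_comm m n

theorem heckeU_expandProdDiff {m n : ℕ} (hm : m ≠ 0) (hn : n ≠ 0) (hmn : m.Coprime n)
    {g : R⟦X⟧} {c d : R} (hg : heckeU m g = c • g - d • expand m hm g) :
    heckeU m (expandProdDiff m n hm hn g) = d • expandProdDiff m n hm hn g := by
  have h₁ : heckeU m (g * expand (m * n) (mul_ne_zero hm hn) g)
      = (c • g - d • expand m hm g) * expand n hn g := by
    rw [expand_mul m hm n hn, heckeU_mul_expand, hg]
  have h₂ : heckeU m (expand m hm g * expand n hn g)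
      = (c • expand n hn g - d • expand (m * n) (mul_ne_zero hm hn) g) * g := by
    rw [mul_comm, heckeU_mul_expand, heckeU_expand_of_coprime hmn, hg, map_sub, map_smul,
      map_smul, expand_comm, ← expand_mul m hm n hn]
  rw [expandProdDiff, map_sub, h₁, h₂]
  simp only [smul_eq_C_mul]
  ring

end PowerSeries

open PowerSeries

theorem Gser_eq_expandProdDiff (a : ℕ → ℂ) :
    Gser a = expandProdDiff 2 3 two_ne_zero three_ne_zero (mk a) := by
  simp only [Gser, expandProdDiff]
  congr <;> ext <;> simp [coeff_expand]

/-- If `g = Σ a(n)qⁿ` satisfies the Hecke eigen-recursion at `2`: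
`a(2n) = a(2)a(n) − χ(2)·2^{k−1}·a(n/2)` (with `a(n/2) = 0` if `2 ∤ n`), then
`G = g(z)g(6z) − g(2z)g(3z) = Σ c(n)qⁿ` satisfies `G | U₂ = χ(2)·2^{k−1}·G`, i.e.
`c(2n) = χ(2)·2^{k−1}·c(n)` for all `n`. -/
theorem stmt19 (k : ℕ) (χ2 : ℂ) (a : ℕ → ℂ)
    (heig : ∀ n : ℕ,
      a (2 * n) = a 2 * a n - χ2 * 2 ^ (k - 1) * (if 2 ∣ n then a (n / 2) else 0)) :
    ∀ n : ℕ, PowerSeries.coeff (2 * n) (Gser a)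
      = χ2 * 2 ^ (k - 1) * PowerSeries.coeff n (Gser a) := by
  have hU : heckeU 2 (mk a) = a 2 • mk a - (χ2 * 2 ^ (k - 1)) • expand 2 two_ne_zero (mk a) := by
    ext n
    simp [coeff_expand, heig]
  intro n
  simpa [Gser_eq_expandProdDiff] using
    congrArg (coeff n) (heckeU_expandProdDiff two_ne_zero three_ne_zero (by norm_num) hU)
end
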